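/- arXiv:1301.6201 — 3 statements merged into one kernel-verified Lean document; each statement's English description precedes it below -/
import Mathlib

section
/- Every isomorphism in the category of measurable spaces and stochastic maps is deterministic, i.e., if k : X → Y is a stochastic map with a two-sided inverse stochastic map, then k(x,B) ∈ {0,1} for all x ∈ X and measurable B ⊆ Y. -/
open MeasureTheory ProbabilityTheory

/-! If `k` has a two-sided inverse `h`, then for measurable `B` the function `f = k(·, B)`,
bounded by `1`, integrates against every `h y` to `(k ∘ h)(y, B) = δ_y(B) ∈ {0, 1}`; hence
`f ∈ {0, 1}` holds `h y`-almost everywhere for every `y`. A property holding `h y`-a.e. for all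
`y` holds at every `x`, since `δ_x = h ∘ k (x, ·)` puts the mass of its failure set at `0`. -/

section

variable {X Y : Type*} [MeasurableSpace X] [MeasurableSpace Y]

theorem ae_eq_zero_or_one_of_lintegral_eq_zero_or_one {μ : Measure X} [IsProbabilityMeasure μ]
    {f : X → ENNReal} (hf : AEMeasurable f μ) (hf_le : ∀ᵐ x ∂μ, f x ≤ 1)
    (hint : ∫⁻ x, f x ∂μ = 0 ∨ ∫⁻ x, f x ∂μ = 1) : ∀ᵐ x ∂μ, f x = 0 ∨ f x = 1 := by
  rcases hint with hint | hint
  · filter_upwards [(lintegral_eq_zero_iff' hf).mp hint] with x hx using Or.inl hx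
  · have hf_one : f =ᵐ[μ] 1 :=
      ae_eq_of_ae_le_of_lintegral_le hf_le (by simp [hint]) aemeasurable_const
        (by simp [hint])
    filter_upwards [hf_one] with x hx using Or.inr hx

namespace ProbabilityTheory.Kernel

theorem ae_apply_eq_zero_or_one_of_comp_eq_id (k : Kernel X Y) [IsMarkovKernel k]
    (h : Kernel Y X) [IsMarkovKernel h] (hkh : k ∘ₖ h = Kernel.id) (y : Y) {B : Set Y}
    (hB : MeasurableSet B) : ∀ᵐ x ∂(h y), k x B = 0 ∨ k x B = 1 := by
  refine ae_eq_zero_or_one_of_lintegral_eq_zero_or_one (k.measurable_coe hB).aemeasurable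
    (.of_forall fun _ => prob_le_one) ?_
  rw [← comp_apply' k h y hB, hkh, id_apply]
  exact Measure.dirac_apply_eq_zero_or_one

theorem forall_of_forall_ae_of_comp_eq_id (k : Kernel X Y) (h : Kernel Y X)
    (hhk : h ∘ₖ k = Kernel.id) {p : X → Prop} (hp : MeasurableSet {x | p x})
    (hae : ∀ y, ∀ᵐ x ∂(h y), p x) (x : X) : p x := by
  have hdirac : Measure.dirac x {x | p x}ᶜ = 0 := by
    have hnull : ∀ y, h y {x | p x}ᶜ = 0 := fun y => ae_iff.mp (hae y)
    rw [← id_apply, ← hhk, comp_apply' h k x hp.compl]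
    simp [hnull]
  by_contra hx
  simp [Measure.dirac_apply' x hp.compl, hx] at hdirac

end ProbabilityTheory.Kernel

end

/-- Every isomorphism in the category `Stoch` of measurable spaces and stochastic maps is
deterministic: if `k : X → Y` is a Markov kernel with a two-sided inverse Markov kernel,
then `k x B ∈ {0, 1}` for every `x` and measurable `B`. -/
theorem stmt_7 {X Y : Type*} [MeasurableSpace X] [MeasurableSpace Y]
    (k : Kernel X Y) [IsMarkovKernel k] (h : Kernel Y X) [IsMarkovKernel h]
    (hinv₁ : h ∘ₖ k = Kernel.id) (hinv₂ : k ∘ₖ h = Kernel.id) :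
    ∀ (x : X) (B : Set Y), MeasurableSet B → k x B = 0 ∨ k x B = 1 := by
  intro x B hB
  have hmeas : MeasurableSet {x | k x B = 0 ∨ k x B = 1} :=
    (k.measurable_coe hB (measurableSet_singleton 0)).union
      (k.measurable_coe hB (measurableSet_singleton 1))
  exact Kernel.forall_of_forall_ae_of_comp_eq_id k h hinv₁ hmeas
    (fun y => Kernel.ae_apply_eq_zero_or_one_of_comp_eq_id k h hinv₂ y hB) x
end

section
/- A stochastic map k : X → Y into a countably generated measurable space Y is deterministic (takes values only in {0,1}) if and only if there exists a measurable function f : X → Y with k = δ_f. -/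
/-!
A zero-one probability measure `μ` on a space generated by sets `gₙ` has full measure on
`⋂ n, tₙ`, where `tₙ` is whichever of `gₙ`, `gₙᶜ` has measure one; pick a point `y` there.
The sets `B` with `y ∈ B ↔ μ B = 1` form a σ-algebra (a countable union has measure one iff
one of its members does), and it contains every `gₙ`, so `μ = δ_y`. Choosing such a `y` for
every `k x` gives `f`, which is measurable because `f ⁻¹' B = {x | k x B = 1}`.
-/

open MeasureTheory ProbabilityTheory Set

namespace MeasureTheory

variable {α : Type*} {mα : MeasurableSpace α} {μ : Measure α} [IsZeroOneMeasure μ]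

lemma IsZeroOneMeasure.measure_iUnion_eq_one_iff {ι : Sort*} [Countable ι] {s : ι → Set α} :
    μ (⋃ i, s i) = 1 ↔ ∃ i, μ (s i) = 1 := by
  refine ⟨fun h ↦ ?_, fun ⟨i, hi⟩ ↦ ?_⟩
  · by_contra! hne
    have hnull : μ (⋃ i, s i) = 0 :=
      measure_iUnion_null fun i ↦ (μ.zero_one (s i)).resolve_right (hne i)
    simp [hnull] at h
  · refine (μ.zero_one _).resolve_left fun h ↦ ?_
    simpa [hi] using measure_mono_null (subset_iUnion s i) h

lemma IsZeroOneMeasure.eq_dirac_of_generateFrom [IsProbabilityMeasure μ] {S : Set (Set α)}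
    (hS : mα = MeasurableSpace.generateFrom S) {y : α} (hy : ∀ s ∈ S, y ∈ s ↔ μ s = 1) :
    μ = Measure.dirac y := by
  have hmem : ∀ s, MeasurableSet s → (y ∈ s ↔ μ s = 1) := by
    subst hS
    intro s hs
    induction s, hs using MeasurableSpace.generateFrom_induction with
    | hC s hs => exact hy s hs
    | empty => simp
    | compl s hs ih =>
      rw [mem_compl_iff, prob_compl_eq_one_iff hs, ih]
      exact ⟨(μ.zero_one s).resolve_right, fun h0 h1 ↦ by simp [h0] at h1⟩
    | iUnion s _ ih => simp [measure_iUnion_eq_one_iff, ih]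
  ext s hs
  rw [Measure.dirac_apply' y hs]
  by_cases h : y ∈ s
  · simp [h, (hmem s hs).1 h]
  · simpa [h] using (μ.zero_one s).resolve_right (mt (hmem s hs).2 h)

lemma IsZeroOneMeasure.exists_eq_dirac_of_countablyGenerated
    [MeasurableSpace.CountablyGenerated α] [IsProbabilityMeasure μ] :
    ∃ y, μ = Measure.dirac y := by
  set g := MeasurableSpace.natGeneratingSequence α
  have hg : ∀ n, MeasurableSet (g n) := MeasurableSpace.measurableSet_natGeneratingSequence
  set t : ℕ → Set α := fun n ↦ if μ (g n) = 1 then g n else (g n)ᶜ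
  have ht : ∀ n, ∀ᵐ x ∂μ, x ∈ t n := by
    intro n
    by_cases h : μ (g n) = 1
    · simpa [t, h] using ae_iff.2 ((prob_compl_eq_zero_iff (hg n)).2 h)
    · simpa [t, h, ae_iff] using (μ.zero_one (g n)).resolve_right h
  obtain ⟨y, hy⟩ := (ae_all_iff.2 ht).exists
  refine ⟨y, eq_dirac_of_generateFrom
    (MeasurableSpace.generateFrom_natGeneratingSequence α).symm ?_⟩
  rintro _ ⟨n, rfl⟩
  by_cases h : μ (g n) = 1
  · exact iff_of_true (by simpa [t, h] using hy n) h
  · exact iff_of_false (by simpa [t, h] using hy n) h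

end MeasureTheory

namespace ProbabilityTheory.Kernel

variable {X Y : Type*} {mX : MeasurableSpace X} {mY : MeasurableSpace Y}

lemma measurable_of_apply_eq_dirac {κ : Kernel X Y} {f : X → Y}
    (hf : ∀ x, κ x = Measure.dirac (f x)) : Measurable f := by
  intro s hs
  have hpre : f ⁻¹' s = (fun x ↦ κ x s) ⁻¹' {1} := by
    ext x
    simp [hf, Measure.dirac_apply' _ hs, indicator_eq_one_iff_mem]
  rw [hpre]
  exact κ.measurable_coe hs (measurableSet_singleton 1)

theorem IsDeterministic.exists_eq_deterministic_of_countablyGenerated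
    [MeasurableSpace.CountablyGenerated Y] (κ : Kernel X Y) [IsMarkovKernel κ]
    [IsDeterministic κ] : ∃ (f : X → Y) (hf : Measurable f), κ = deterministic f hf := by
  choose f hf using fun x ↦ IsZeroOneMeasure.exists_eq_dirac_of_countablyGenerated (μ := κ x)
  exact ⟨f, measurable_of_apply_eq_dirac hf, Kernel.ext hf⟩

end ProbabilityTheory.Kernel

/-- A stochastic map into a countably generated measurable space is deterministic (takes
only the values 0 and 1) if and only if it is induced by a measurable function. -/
theorem stmt_8 {X Y : Type*} [MeasurableSpace X] [MeasurableSpace Y]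
    [MeasurableSpace.CountablyGenerated Y]
    (k : Kernel X Y) [IsMarkovKernel k] :
    (∀ (x : X) (B : Set Y), MeasurableSet B → k x B = 0 ∨ k x B = 1) ↔
      ∃ (f : X → Y) (hf : Measurable f), k = Kernel.deterministic f hf := by
  constructor
  · intro h
    have : IsDeterministic k := (Kernel.isDeterministic_iff_isZeroOneMeasure k).2 fun x ↦ ⟨h x⟩
    exact Kernel.IsDeterministic.exists_eq_deterministic_of_countablyGenerated k
  · rintro ⟨f, hf, rfl⟩ x B hB
    exact IsZeroOneMeasure.zero_one₀ hB
end

section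
/- Every measurable space (X, Σ), regarded as an object of the symmetric monoidal category Stoch, carries a unique comonoid structure, namely the deterministic comultiplication induced by the diagonal x ↦ (x,x) and the counit induced by the unique map to the one-point space; moreover this comonoid is commutative. -/
open MeasureTheory ProbabilityTheory

/-
The counit laws say exactly that both marginals of `Δ x` are `δ_x` (discarding with a Markov
kernel does not change the other marginal), and a probability measure on `X × X` whose first
marginal is `δ_x` is the product `δ_x ⊗ ν` of its marginals; hence `Δ x = δ_(x,x)`. A Markov
kernel into the one-point space has no freedom at all. Existence is a computation with
deterministic kernels, once `Kernel.par` is identified with Mathlib's parallel composition `∥ₖ`;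
`Kernel.copy'` and `Kernel.discard'` are definitionally Mathlib's `Kernel.copy` and `Kernel.discard`.
-/

/-- The monoidal product (tensor) of two kernels in `Stoch`:
`(k ⊗ l) (x, z)` is the product measure of `k x` and `l z`. -/
noncomputable def Kernel.par {α β γ δ : Type*} [MeasurableSpace α] [MeasurableSpace β]
    [MeasurableSpace γ] [MeasurableSpace δ]
    (k : Kernel α β) (l : Kernel γ δ) [IsSFiniteKernel k] [IsSFiniteKernel l] :
    Kernel (α × γ) (β × δ) :=
  (k.comap Prod.fst measurable_fst) ×ₖ (l.comap Prod.snd measurable_snd)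

/-- The canonical comultiplication (copy) kernel, induced by the diagonal `x ↦ (x, x)`. -/
noncomputable def Kernel.copy' (X : Type*) [MeasurableSpace X] : Kernel X (X × X) :=
  Kernel.deterministic (fun x => (x, x)) (measurable_id.prodMk measurable_id)

/-- The canonical counit (discard) kernel, induced by the unique map to the one-point space. -/
noncomputable def Kernel.discard' (X : Type*) [MeasurableSpace X] : Kernel X Unit :=
  Kernel.deterministic (fun _ => ()) measurable_const

instance {X : Type*} [MeasurableSpace X] : IsMarkovKernel (Kernel.copy' X) := by
  unfold Kernel.copy'; infer_instance

instance {X : Type*} [MeasurableSpace X] : IsMarkovKernel (Kernel.discard' X) := by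
  unfold Kernel.discard'; infer_instance

namespace MeasureTheory.Measure

variable {α β : Type*} [MeasurableSpace α] [MeasurableSpace β]

theorem eq_dirac_prod_of_map_fst_eq_dirac {μ : Measure (α × β)} [IsFiniteMeasure μ] {a : α}
    (h : μ.map Prod.fst = dirac a) : μ = (dirac a).prod (μ.map Prod.snd) := by
  refine (prod_eq fun s t hs ht => ?_).symm
  have hfst (u : Set α) (hu : MeasurableSet u) : μ (Prod.fst ⁻¹' u) = dirac a u := by
    rw [← map_apply measurable_fst hu, h]
  rw [map_apply measurable_snd ht]
  by_cases ha : a ∈ s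
  · have hconull : μ (Prod.fst ⁻¹' s)ᶜ = 0 := by
      rw [← Set.preimage_compl, hfst _ hs.compl, dirac_apply' _ hs.compl,
        Set.indicator_of_notMem (Set.notMem_compl_iff.mpr ha)]
    rw [Set.prod_eq, Set.inter_comm, measure_inter_conull hconull, dirac_apply_of_mem ha,
      one_mul]
  · have hnull : μ (Prod.fst ⁻¹' s) = 0 := by
      rw [hfst s hs, dirac_apply' _ hs, Set.indicator_of_notMem ha]
    rw [measure_mono_null (fun p hp => hp.1) hnull, dirac_apply' _ hs,
      Set.indicator_of_notMem ha, zero_mul]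

end MeasureTheory.Measure

namespace ProbabilityTheory.Kernel

variable {α β γ δ : Type*} [MeasurableSpace α] [MeasurableSpace β] [MeasurableSpace γ]
  [MeasurableSpace δ]

theorem fst_parallelComp (κ : Kernel α β) [IsSFiniteKernel κ] (η : Kernel γ δ)
    [IsMarkovKernel η] : (κ ∥ₖ η).fst = κ.comap Prod.fst measurable_fst := by
  ext p : 1
  rw [fst_apply, parallelComp_apply, Measure.map_fst_prod, measure_univ, one_smul, comap_apply]

theorem snd_parallelComp (κ : Kernel α β) [IsMarkovKernel κ] (η : Kernel γ δ)
    [IsSFiniteKernel η] : (κ ∥ₖ η).snd = η.comap Prod.snd measurable_snd := by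
  ext p : 1
  rw [snd_apply, parallelComp_apply, Measure.map_snd_prod, measure_univ, one_smul, comap_apply]

theorem fst_copy : (copy α).fst = Kernel.id := by
  rw [copy, fst_eq, deterministic_map _ measurable_fst]
  rfl

theorem snd_copy : (copy α).snd = Kernel.id := by
  rw [copy, snd_eq, deterministic_map _ measurable_snd]
  rfl

theorem eq_copy_of_fst_eq_id_of_snd_eq_id (Δ : Kernel α (α × α)) [IsFiniteKernel Δ]
    (hfst : Δ.fst = Kernel.id) (hsnd : Δ.snd = Kernel.id) : Δ = copy α := by
  ext a : 1
  have hmap_fst : (Δ a).map Prod.fst = Measure.dirac a := by rw [← fst_apply, hfst, id_apply]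
  have hmap_snd : (Δ a).map Prod.snd = Measure.dirac a := by rw [← snd_apply, hsnd, id_apply]
  rw [Measure.eq_dirac_prod_of_map_fst_eq_dirac hmap_fst, hmap_snd, Measure.dirac_prod_dirac,
    copy_apply]

theorem eq_discard (ε : Kernel α Unit) [IsMarkovKernel ε] : ε = discard α :=
  -- `Kernel.id` and `discard Unit` agree definitionally, by eta for `Unit`
  calc ε = Kernel.id ∘ₖ ε := (id_comp ε).symm
    _ = discard α := comp_discard ε

theorem copy_coassoc :
    deterministic (MeasurableEquiv.prodAssoc : (α × α) × α ≃ᵐ α × α × α)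
        MeasurableEquiv.prodAssoc.measurable ∘ₖ ((copy α ∥ₖ Kernel.id) ∘ₖ copy α) =
      (Kernel.id ∥ₖ copy α) ∘ₖ copy α := by
  simp only [copy, Kernel.id, deterministic_parallelComp_deterministic,
    deterministic_comp_deterministic]
  rfl

end ProbabilityTheory.Kernel

section Par

variable {α β γ δ : Type*} [MeasurableSpace α] [MeasurableSpace β] [MeasurableSpace γ]
  [MeasurableSpace δ]

theorem Kernel.par_eq_parallelComp (k : Kernel α β) (l : Kernel γ δ) [IsSFiniteKernel k]
    [IsSFiniteKernel l] : Kernel.par k l = k ∥ₖ l := by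
  ext p : 1
  rw [Kernel.par, Kernel.prod_apply, Kernel.comap_apply, Kernel.comap_apply,
    Kernel.parallelComp_apply]

theorem Kernel.deterministic_fst_comp_par_id_comp (ε : Kernel γ δ) [IsMarkovKernel ε]
    (Δ : Kernel α (β × γ)) :
    Kernel.deterministic Prod.fst measurable_fst ∘ₖ (Kernel.par Kernel.id ε ∘ₖ Δ) = Δ.fst := by
  rw [Kernel.deterministic_comp_eq_map, ← Kernel.fst_eq, Kernel.fst_comp,
    Kernel.par_eq_parallelComp, Kernel.fst_parallelComp, ← Kernel.comp_deterministic_eq_comap,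
    Kernel.id_comp, Kernel.deterministic_comp_eq_map, Kernel.fst_eq]

theorem Kernel.deterministic_snd_comp_par_id_comp (ε : Kernel β δ) [IsMarkovKernel ε]
    (Δ : Kernel α (β × γ)) :
    Kernel.deterministic Prod.snd measurable_snd ∘ₖ (Kernel.par ε Kernel.id ∘ₖ Δ) = Δ.snd := by
  rw [Kernel.deterministic_comp_eq_map, ← Kernel.snd_eq, Kernel.snd_comp,
    Kernel.par_eq_parallelComp, Kernel.snd_parallelComp, ← Kernel.comp_deterministic_eq_comap,
    Kernel.id_comp, Kernel.deterministic_comp_eq_map, Kernel.snd_eq]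

end Par

/-- Every object of `Stoch` carries a unique comonoid structure, namely the deterministic
one induced by the diagonal and the map to the one-point space; moreover it is commutative. -/
theorem stmt_10 {X : Type*} [MeasurableSpace X] :
    -- existence: the canonical copy/discard kernels form a commutative comonoid
    ((Kernel.deterministic (MeasurableEquiv.prodAssoc : (X × X) × X ≃ᵐ X × X × X)
        MeasurableEquiv.prodAssoc.measurable ∘ₖ
          ((Kernel.par (Kernel.copy' X) Kernel.id) ∘ₖ Kernel.copy' X)) =
        (Kernel.par (Kernel.id : Kernel X X) (Kernel.copy' X)) ∘ₖ Kernel.copy' X) ∧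
    ((Kernel.deterministic (Prod.fst : X × Unit → X) measurable_fst ∘ₖ
        ((Kernel.par (Kernel.id : Kernel X X) (Kernel.discard' X)) ∘ₖ Kernel.copy' X)) =
        Kernel.id) ∧
    ((Kernel.deterministic (Prod.snd : Unit × X → X) measurable_snd ∘ₖ
        ((Kernel.par (Kernel.discard' X) (Kernel.id : Kernel X X)) ∘ₖ Kernel.copy' X)) =
        Kernel.id) ∧
    (Kernel.swap X X ∘ₖ Kernel.copy' X = Kernel.copy' X) ∧
    -- uniqueness: any comonoid structure on `X` in `Stoch` is the canonical one
    (∀ (Δ : Kernel X (X × X)) (ε : Kernel X Unit)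
        [IsMarkovKernel Δ] [IsMarkovKernel ε],
      ((Kernel.deterministic (MeasurableEquiv.prodAssoc : (X × X) × X ≃ᵐ X × X × X)
          MeasurableEquiv.prodAssoc.measurable ∘ₖ ((Kernel.par Δ Kernel.id) ∘ₖ Δ)) =
          (Kernel.par (Kernel.id : Kernel X X) Δ) ∘ₖ Δ) →
      ((Kernel.deterministic (Prod.fst : X × Unit → X) measurable_fst ∘ₖ
          ((Kernel.par (Kernel.id : Kernel X X) ε) ∘ₖ Δ)) = Kernel.id) →
      ((Kernel.deterministic (Prod.snd : Unit × X → X) measurable_snd ∘ₖ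
          ((Kernel.par ε (Kernel.id : Kernel X X)) ∘ₖ Δ)) = Kernel.id) →
      Δ = Kernel.copy' X ∧ ε = Kernel.discard' X) := by
  refine ⟨?_, ?_, ?_, Kernel.swap_copy, fun Δ ε _ _ _ hleft hright => ⟨?_, Kernel.eq_discard ε⟩⟩
  · rw [Kernel.par_eq_parallelComp, Kernel.par_eq_parallelComp]
    exact Kernel.copy_coassoc
  · rw [Kernel.deterministic_fst_comp_par_id_comp]
    exact Kernel.fst_copy
  · rw [Kernel.deterministic_snd_comp_par_id_comp]
    exact Kernel.snd_copy
  · rw [Kernel.deterministic_fst_comp_par_id_comp] at hleft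
    rw [Kernel.deterministic_snd_comp_par_id_comp] at hright
    exact Kernel.eq_copy_of_fst_eq_id_of_snd_eq_id Δ hleft hright
end
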